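/- Let d, n, t be positive integers with d ≥ t ≥ 2 and n ≡ 1 (mod d). Let (c(k))_{k≥0} be a sequence of complex numbers such that c(k) = 0 for (n−1)/d < k < n, and such that c(ln+k) = c(ln)·c(k) for all nonnegative integers l and k with 0 ≤ k ≤ n−1. Then for all nonnegative integers l and all 0 ≤ k ≤ n−1: Σ_{k1+⋯+kt = ln+k} c(k1)⋯c(kt) = ( Σ_{k1+⋯+kt = k} c(k1)⋯c(kt) ) · Σ_{s1=0}^{l} c(s1 n) Σ_{s2=0}^{l−s1} c(s2 n) ⋯ Σ_{s_{t−1}=0}^{l−s1−⋯−s_{t−2}} c(s_{t−1} n) · c((l−s1−⋯−s_{t−1}) n), where all sums over k1,…,kt run over t-tuples of nonnegative integers with the indicated total. -/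

import Mathlib

/-!
Put `m = (n - 1) / d`, so that `t * m < n`. Writing each `kᵢ = sᵢ n + rᵢ` with `rᵢ < n`,
multiplicativity gives `c(kᵢ) = c(sᵢ n) c(rᵢ)`, which vanishes unless `rᵢ ≤ m`. When every
`rᵢ ≤ m`, the remainders add up to at most `t m < n`, so no carry occurs: `∑ rᵢ = k` and
`∑ sᵢ = l`. Hence the surviving tuples `(kᵢ)` correspond bijectively to pairs of tuples
`(rᵢ)` with total `k` and `(sᵢ)` with total `l`, and the sum factors.
-/

open Finset
open Finset.Nat (antidiagonalTuple mem_antidiagonalTuple)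

theorem Nat.eq_and_eq_of_mul_add_eq_mul_add {n q r q' r' : ℕ} (hr : r < n) (hr' : r' < n)
    (h : q * n + r = q' * n + r') : q = q' ∧ r = r' := by
  have hn : 0 < n := by omega
  obtain ⟨hq₁, hr₁⟩ := (Nat.div_mod_unique (a := q * n + r) (d := q) (c := r) hn).2 ⟨by ring, hr⟩
  obtain ⟨hq₂, hr₂⟩ :=
    (Nat.div_mod_unique (a := q * n + r) (d := q') (c := r') hn).2 ⟨by rw [h]; ring, hr'⟩
  exact ⟨hq₁.symm.trans hq₂, hr₁.symm.trans hr₂⟩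

theorem Finset.Nat.le_of_mem_antidiagonalTuple {t N : ℕ} {f : Fin t → ℕ}
    (hf : f ∈ antidiagonalTuple t N) (i : Fin t) : f i ≤ N :=
  mem_antidiagonalTuple.1 hf ▸ single_le_sum (fun j _ => Nat.zero_le (f j)) (mem_univ i)

theorem Finset.Nat.filter_piFinset_range_sum_eq_antidiagonalTuple (t N : ℕ) :
    (Fintype.piFinset fun _ : Fin t => range (N + 1)).filter (fun f => ∑ i, f i = N) =
      antidiagonalTuple t N := by
  ext f
  rw [mem_filter, Fintype.mem_piFinset, ← mem_antidiagonalTuple, and_iff_right_iff_imp]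
  exact fun hf i => mem_range.2 (Nat.lt_succ_of_le (le_of_mem_antidiagonalTuple hf i))

section TupleMulAdd

variable {t : ℕ}

def tupleMulAdd (n : ℕ) (p : (Fin t → ℕ) × (Fin t → ℕ)) (i : Fin t) : ℕ :=
  p.2 i * n + p.1 i

theorem tupleMulAdd_injOn (n : ℕ) :
    Set.InjOn (tupleMulAdd (t := t) n) {p | ∀ i, p.1 i < n} := by
  intro p hp p' hp' h
  have h_coord i := Nat.eq_and_eq_of_mul_add_eq_mul_add (hp i) (hp' i) (congrFun h i)
  exact Prod.ext (funext fun i => (h_coord i).2) (funext fun i => (h_coord i).1)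

theorem tupleMulAdd_mem_antidiagonalTuple {n k l : ℕ} {p : (Fin t → ℕ) × (Fin t → ℕ)}
    (hp : p ∈ antidiagonalTuple t k ×ˢ antidiagonalTuple t l) :
    tupleMulAdd n p ∈ antidiagonalTuple t (l * n + k) := by
  simp only [mem_product, mem_antidiagonalTuple] at hp ⊢
  simp only [tupleMulAdd, sum_add_distrib, ← sum_mul, hp.1, hp.2]

theorem mem_image_tupleMulAdd_of_mod_le {n m k l : ℕ} (htm : t * m < n) (hk : k < n)
    {f : Fin t → ℕ} (hf : f ∈ antidiagonalTuple t (l * n + k)) (hfm : ∀ i, f i % n ≤ m) :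
    f ∈ (antidiagonalTuple t k ×ˢ antidiagonalTuple t l).image (tupleMulAdd n) := by
  have h_rem : ∑ i, f i % n < n :=
    calc ∑ i, f i % n ≤ ∑ _i : Fin t, m := sum_le_sum fun i _ => hfm i
      _ = t * m := by simp
      _ < n := htm
  have h_split : (∑ i, f i / n) * n + ∑ i, f i % n = l * n + k := by
    rw [sum_mul, ← sum_add_distrib, ← mem_antidiagonalTuple.1 hf]
    exact sum_congr rfl fun i _ => Nat.div_add_mod' (f i) n
  obtain ⟨h_quot, h_rem_eq⟩ := Nat.eq_and_eq_of_mul_add_eq_mul_add h_rem hk h_split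
  refine mem_image.2 ⟨(fun i => f i % n, fun i => f i / n), ?_, ?_⟩
  · simp only [mem_product, mem_antidiagonalTuple]
    exact ⟨h_rem_eq, h_quot⟩
  · exact funext fun i => Nat.div_add_mod' (f i) n

end TupleMulAdd

theorem sum_antidiagonalTuple_mul_add {R : Type*} [CommSemiring R] {n m t : ℕ} (c : ℕ → R)
    (htm : t * m < n) (hc : ∀ k, m < k → k < n → c k = 0)
    (hmul : ∀ l k, k < n → c (l * n + k) = c (l * n) * c k) {l k : ℕ} (hk : k < n) :
    ∑ f ∈ antidiagonalTuple t (l * n + k), ∏ i, c (f i) =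
      (∑ r ∈ antidiagonalTuple t k, ∏ i, c (r i)) *
        ∑ s ∈ antidiagonalTuple t l, ∏ i, c (s i * n) := by
  have hn : 0 < n := by omega
  set P := antidiagonalTuple t k ×ˢ antidiagonalTuple t l
  have h_rem_lt (p) (hp : p ∈ P) (i) : p.1 i < n :=
    (Finset.Nat.le_of_mem_antidiagonalTuple (mem_product.1 hp).1 i).trans_lt hk
  have h_injOn : Set.InjOn (tupleMulAdd (t := t) n) P :=
    (tupleMulAdd_injOn n).mono fun p hp => h_rem_lt p hp
  have h_prod_split (p) (hp : p ∈ P) :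
      (∏ i, c (p.1 i)) * ∏ i, c (p.2 i * n) = ∏ i, c (tupleMulAdd n p i) := by
    rw [← prod_mul_distrib]
    exact prod_congr rfl fun i _ => by rw [tupleMulAdd, hmul _ _ (h_rem_lt p hp i), mul_comm]
  rw [sum_mul_sum, ← sum_product', sum_congr rfl h_prod_split,
    ← sum_image (f := fun f => ∏ i, c (f i)) h_injOn]
  refine (sum_subset (fun f hf => ?_) fun f hf hf_img => ?_).symm
  · obtain ⟨p, hp, rfl⟩ := mem_image.1 hf
    exact tupleMulAdd_mem_antidiagonalTuple hp
  · obtain ⟨i, hi⟩ : ∃ i, m < f i % n := by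
      by_contra! h
      exact hf_img (mem_image_tupleMulAdd_of_mod_le htm hk hf h)
    refine prod_eq_zero (mem_univ i) ?_
    rw [← Nat.div_add_mod' (f i) n, hmul _ _ (Nat.mod_lt _ hn), hc _ hi (Nat.mod_lt _ hn),
      mul_zero]

theorem sum_tuples_multiplicative_general (d n t : ℕ) (hn : 0 < n) (htd : t ≤ d)
    (c : ℕ → ℂ) (hc : ∀ k, (n - 1) / d < k → k < n → c k = 0)
    (hmul : ∀ l k : ℕ, k ≤ n - 1 → c (l * n + k) = c (l * n) * c k)
    (l k : ℕ) (hk : k ≤ n - 1) :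
    (∑ f ∈ (Fintype.piFinset fun _ : Fin t => Finset.range (l * n + k + 1)).filter
        (fun f => ∑ i, f i = l * n + k), ∏ i, c (f i)) =
      (∑ f ∈ (Fintype.piFinset fun _ : Fin t => Finset.range (k + 1)).filter
          (fun f => ∑ i, f i = k), ∏ i, c (f i)) *
        (∑ s ∈ (Fintype.piFinset fun _ : Fin t => Finset.range (l + 1)).filter
            (fun s => ∑ i, s i = l), ∏ i, c (s i * n)) := by
  have htm : t * ((n - 1) / d) < n :=
    ((Nat.mul_le_mul_right _ htd).trans (Nat.mul_div_le _ _)).trans_lt (by omega)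
  simp only [Finset.Nat.filter_piFinset_range_sum_eq_antidiagonalTuple]
  exact sum_antidiagonalTuple_mul_add c htm hc (fun l k hk => hmul l k (by omega)) (by omega)

theorem sum_tuples_multiplicative (d n t : ℕ) (hd : 0 < d) (hn : 0 < n)
    (ht : 2 ≤ t) (htd : t ≤ d) (hmod : n % d = 1)
    (c : ℕ → ℂ) (hc : ∀ k, (n - 1) / d < k → k < n → c k = 0)
    (hmul : ∀ l k : ℕ, k ≤ n - 1 → c (l * n + k) = c (l * n) * c k)
    (l k : ℕ) (hk : k ≤ n - 1) :
    (∑ f ∈ (Fintype.piFinset fun _ : Fin t => Finset.range (l * n + k + 1)).filter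
        (fun f => ∑ i, f i = l * n + k), ∏ i, c (f i)) =
      (∑ f ∈ (Fintype.piFinset fun _ : Fin t => Finset.range (k + 1)).filter
          (fun f => ∑ i, f i = k), ∏ i, c (f i)) *
        (∑ s ∈ (Fintype.piFinset fun _ : Fin t => Finset.range (l + 1)).filter
            (fun s => ∑ i, s i = l), ∏ i, c (s i * n)) :=
  sum_tuples_multiplicative_general d n t hn htd c hc hmul l k hk
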